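/- arXiv:math/9602218 — 8 statements merged into one kernel-verified Lean document; each statement's English description precedes it below -/
import Mathlib

section
/- Let H be a second countable locally compact topological group acting continuously on a second countable locally compact Hausdorff topological space X. Then there exist a Borel set Y ⊆ X and an open neighborhood V of the identity element of H such that Y meets every orbit (for every x ∈ X there exists h ∈ H with h • x ∈ Y), and Y is V-lacunary: for every y ∈ Y and every v ∈ V, if v • y ∈ Y then v • y = y. -/
/-!
Metrize `X` and fix a dense sequence `q`; then `x ↦ (dist x (q i))ᵢ` embeds `X` continuously
into `ℕ → ℝ`, whose lexicographic order has a least element on every nonempty compact set.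
Fix a compact symmetric neighbourhood `K` of `1`. The closed sets `valley K (q i) (1 / (m + 1))`
cover `X`, and two points of one of them that are related by an element of `K * K` are already
related by an element of `K`, since each would be strictly deeper in the valley than the other.
Enumerate these sets as `S n`. Send each orbit to the first `S n` it meets, and there keep the
points that are lexicographically least among their `K`-translates lying in `S n`. This set is
Borel because `K` is compact and `H` is σ-compact. It meets every orbit because a `K`-orbit
piece of `S n` is compact, and it is `K`-lacunary because two selected points related by
`k ∈ K` are each below the other.
-/

open Set Function Pointwise

lemma Pi.toLex_lt_toLex_iff {ι : Type*} [LT ι] {β : ι → Type*} [∀ i, LT (β i)]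
    {x y : ∀ i, β i} : toLex x < toLex y ↔ ∃ i, (∀ j < i, x j = y j) ∧ x i < y i :=
  Iff.rfl

section LexMin

variable {α : Type*} [LinearOrder α]

def lexMinimizers (s : Set (ℕ → α)) : ℕ → Set (ℕ → α)
  | 0 => s
  | n + 1 => {a ∈ lexMinimizers s n | ∀ b ∈ lexMinimizers s n, a n ≤ b n}

lemma lexMinimizers_succ_subset (s : Set (ℕ → α)) (n : ℕ) :
    lexMinimizers s (n + 1) ⊆ lexMinimizers s n :=
  fun _ ha => ha.1

variable [TopologicalSpace α] [OrderClosedTopology α]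

lemma isCompact_lexMinimizers_and_nonempty {s : Set (ℕ → α)} (hs : IsCompact s)
    (hne : s.Nonempty) (n : ℕ) :
    IsCompact (lexMinimizers s n) ∧ (lexMinimizers s n).Nonempty := by
  induction n with
  | zero => exact ⟨hs, hne⟩
  | succ n ih =>
    obtain ⟨a, ha, hmin⟩ := ih.1.exists_isMinOn ih.2 (continuous_apply n).continuousOn
    have hclosed : IsClosed {a : ℕ → α | ∀ b ∈ lexMinimizers s n, a n ≤ b n} := by
      simp only [ofPred_forall]
      exact isClosed_iInter fun b => isClosed_iInter fun _ =>
        isClosed_le (continuous_apply n) continuous_const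
    exact ⟨ih.1.inter_right hclosed, a, ha, fun b hb => hmin hb⟩

theorem IsCompact.exists_forall_toLex_le {s : Set (ℕ → α)} (hs : IsCompact s)
    (hne : s.Nonempty) : ∃ a ∈ s, ∀ b ∈ s, toLex a ≤ toLex b := by
  have hcpt := isCompact_lexMinimizers_and_nonempty hs hne
  obtain ⟨a, ha⟩ : (⋂ n, lexMinimizers s n).Nonempty :=
    IsCompact.nonempty_iInter_of_sequence_nonempty_isCompact_isClosed _
      (lexMinimizers_succ_subset s) (fun n => (hcpt n).2) (hcpt 0).1
      (fun n => (hcpt n).1.isClosed)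
  rw [mem_iInter] at ha
  refine ⟨a, ha 0, fun b hb => not_lt.1 fun hba => ?_⟩
  obtain ⟨i, hprefix, hlt⟩ := Pi.toLex_lt_toLex_iff.1 hba
  have hb_mem : ∀ j ≤ i, b ∈ lexMinimizers s j := by
    intro j hj
    induction j with
    | zero => exact hb
    | succ j ih =>
      refine ⟨ih (by omega), fun c hc => ?_⟩
      rw [hprefix j (by omega)]
      exact (ha (j + 1)).2 c hc
  exact hlt.not_ge ((ha (i + 1)).2 b (hb_mem i le_rfl))

end LexMin

lemma toLex_lt_toLex_iff_exists_add_one_div_le {x y : ℕ → ℝ} :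
    toLex x < toLex y ↔ ∃ i m : ℕ, (∀ j < i, x j = y j) ∧ x i + 1 / (m + 1) ≤ y i := by
  rw [Pi.toLex_lt_toLex_iff]
  refine ⟨fun ⟨i, hprefix, hlt⟩ => ?_, fun ⟨i, m, hprefix, hle⟩ => ⟨i, hprefix, ?_⟩⟩
  · obtain ⟨m, hm⟩ := exists_nat_one_div_lt (sub_pos.2 hlt)
    exact ⟨i, m, hprefix, by linarith⟩
  · have : (0 : ℝ) < 1 / (m + 1) := by positivity
    linarith

theorem IsCompact.isClosed_setOf_exists_mem {α β : Type*} [TopologicalSpace α]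
    [TopologicalSpace β] {Q : Set α} (hQ : IsCompact Q) {P : α → β → Prop}
    (hP : IsClosed {p : α × β | P p.1 p.2}) : IsClosed {b | ∃ a ∈ Q, P a b} := by
  have : CompactSpace Q := isCompact_iff_compactSpace.mp hQ
  convert isClosedMap_snd_of_compactSpace (X := Q) _
    (hP.preimage (continuous_subtype_val.prodMap continuous_id)) using 1
  ext b
  simp

lemma DenseRange.injective_fun_dist {ι X : Type*} [MetricSpace X] {q : ι → X}
    (hq : DenseRange q) : Injective fun x i => dist x (q i) := by
  intro x y hxy
  refine eq_of_forall_dist_le fun ε hε => ?_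
  obtain ⟨i, hi⟩ := Metric.denseRange_iff.1 hq x (ε / 2) (by linarith)
  have hyi : dist y (q i) = dist x (q i) := (congrFun hxy i).symm
  linarith [dist_triangle_right x y (q i)]

section Sections

variable {H X : Type*} [SMul H X]

variable (H) in
def IsCompleteSection (Y : Set X) : Prop :=
  ∀ x : X, ∃ h : H, h • x ∈ Y

def IsLacunary (V : Set H) (Y : Set X) : Prop :=
  ∀ y ∈ Y, ∀ v ∈ V, v • y ∈ Y → v • y = y

lemma IsLacunary.mono {V W : Set H} {Y : Set X} (hW : IsLacunary W Y) (hVW : V ⊆ W) :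
    IsLacunary V Y :=
  fun y hy v hv => hW y hy v (hVW hv)

def lexMinimalPart (K : Set H) (φ : X → ℕ → ℝ) (S : Set X) : Set X :=
  {x ∈ S | ∀ k ∈ K, k • x ∈ S → toLex (φ x) ≤ toLex (φ (k • x))}

end Sections

section Selection

variable {H X : Type*} [Group H] [MulAction H X]

lemma smul_eq_self_of_mem_lexMinimalPart {K : Set H} (hKinv : K⁻¹ ⊆ K) {φ : X → ℕ → ℝ}
    (hφ : Injective φ) {S : Set X} {y : X} {k : H} (hk : k ∈ K)
    (hy : y ∈ lexMinimalPart K φ S) (hky : k • y ∈ lexMinimalPart K φ S) : k • y = y := by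
  have hle := hy.2 k hk hky.1
  have hge := hky.2 k⁻¹ (hKinv (inv_mem_inv.2 hk)) (by rw [inv_smul_smul]; exact hy.1)
  rw [inv_smul_smul] at hge
  exact hφ (toLex.injective (le_antisymm hge hle))

variable [TopologicalSpace H] [TopologicalSpace X] [ContinuousSMul H X]

lemma exists_smul_mem_lexMinimalPart {K : Set H} (hK : IsCompact K) (hK1 : (1 : H) ∈ K)
    {φ : X → ℕ → ℝ} (hφ : Continuous φ) {S : Set X} (hS : IsClosed S)
    (hsep : ∀ x ∈ S, ∀ g ∈ K * K, g • x ∈ S → ∃ k ∈ K, k • x = g • x) {x : X} (hx : x ∈ S) :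
    ∃ k ∈ K, k • x ∈ lexMinimalPart K φ S := by
  have hT : IsCompact (φ '' (S ∩ (· • x) '' K)) :=
    ((hK.image (continuous_id.smul continuous_const)).inter_left hS).image hφ
  obtain ⟨_, ⟨_, ⟨hyS, k, hk, rfl⟩, rfl⟩, hmin⟩ :=
    hT.exists_forall_toLex_le ⟨φ x, x, ⟨hx, 1, hK1, one_smul H x⟩, rfl⟩
  refine ⟨k, hk, hyS, fun k' hk' hk'S => ?_⟩
  obtain ⟨k'', hk'', heq⟩ :=
    hsep x hx (k' * k) (mul_mem_mul hk' hk) (by rwa [mul_smul])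
  exact hmin _ ⟨_, ⟨hk'S, k'', hk'', heq.trans (mul_smul k' k x)⟩, rfl⟩

variable [MeasurableSpace X] [OpensMeasurableSpace X]

lemma measurableSet_setOf_exists_smul_mem [SigmaCompactSpace H] {S : Set X}
    (hS : IsClosed S) : MeasurableSet {x : X | ∃ h : H, h • x ∈ S} := by
  have hcover : {x : X | ∃ h : H, h • x ∈ S} =
      ⋃ n, {x | ∃ h ∈ compactCovering H n, h • x ∈ S} := by
    ext x
    simp only [mem_ofPred_eq, mem_iUnion]
    constructor
    · rintro ⟨h, hh⟩
      obtain ⟨n, hn⟩ := exists_mem_compactCovering h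
      exact ⟨n, h, hn, hh⟩
    · rintro ⟨n, h, -, hh⟩
      exact ⟨h, hh⟩
  rw [hcover]
  exact .iUnion fun n => ((isCompact_compactCovering H n).isClosed_setOf_exists_mem
    (P := fun h x => h • x ∈ S) (hS.preimage continuous_smul)).measurableSet

lemma measurableSet_lexMinimalPart {K : Set H} (hK : IsCompact K) {φ : X → ℕ → ℝ}
    (hφ : Continuous φ) {S : Set X} (hS : IsClosed S) :
    MeasurableSet (lexMinimalPart K φ S) := by
  have hdiff : lexMinimalPart K φ S =
      S \ {x | ∃ k ∈ K, k • x ∈ S ∧ toLex (φ (k • x)) < toLex (φ x)} := by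
    ext x
    simp only [lexMinimalPart, mem_sdiff, mem_ofPred_eq, not_exists, not_and]
    exact and_congr_right fun _ =>
      forall₂_congr fun _ _ => imp_congr_right fun _ => not_lt.symm
  have hunion : {x | ∃ k ∈ K, k • x ∈ S ∧ toLex (φ (k • x)) < toLex (φ x)} =
      ⋃ (i : ℕ) (m : ℕ), {x | ∃ k ∈ K, k • x ∈ S ∧ (∀ j < i, φ (k • x) j = φ x j) ∧
        φ (k • x) i + 1 / (m + 1) ≤ φ x i} := by
    ext x
    simp only [toLex_lt_toLex_iff_exists_add_one_div_le, mem_iUnion, mem_ofPred_eq]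
    aesop
  rw [hdiff, hunion]
  -- thanks to the margin `1 / (m + 1)` each piece is the projection of a closed set along `K`
  refine hS.measurableSet.diff (.iUnion fun i => .iUnion fun m => ?_)
  refine (hK.isClosed_setOf_exists_mem ?_).measurableSet
  have hsmul : Continuous fun p : H × X => φ (p.1 • p.2) := hφ.comp continuous_smul
  have hsnd : Continuous fun p : H × X => φ p.2 := hφ.comp continuous_snd
  simp only [ofPred_and, ofPred_forall]
  exact (hS.preimage continuous_smul).inter ((isClosed_iInter fun j => isClosed_iInter fun _ =>
    isClosed_eq ((continuous_apply j).comp hsmul) ((continuous_apply j).comp hsnd)).inter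
    (isClosed_le (((continuous_apply i).comp hsmul).add continuous_const)
      ((continuous_apply i).comp hsnd)))

theorem exists_measurableSet_isCompleteSection_isLacunary [SigmaCompactSpace H]
    {K : Set H} (hK : IsCompact K) (hK1 : (1 : H) ∈ K) (hKinv : K⁻¹ ⊆ K)
    {φ : X → ℕ → ℝ} (hφ : Continuous φ) (hφinj : Injective φ)
    {S : ℕ → Set X} (hS : ∀ n, IsClosed (S n)) (hcover : IsCompleteSection H (⋃ n, S n))
    (hsep : ∀ n, ∀ x ∈ S n, ∀ g ∈ K * K, g • x ∈ S n → ∃ k ∈ K, k • x = g • x) :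
    ∃ Y : Set X, MeasurableSet Y ∧ IsCompleteSection H Y ∧ IsLacunary K Y := by
  classical
  let orbitMeets : ℕ → Set X := fun n => {x | ∃ h : H, h • x ∈ S n}
  refine ⟨⋃ n, lexMinimalPart K φ (S n) \ ⋃ m < n, orbitMeets m, ?_, ?_, ?_⟩
  · exact .iUnion fun n => (measurableSet_lexMinimalPart hK hφ (hS n)).diff
      (.iUnion fun m => .iUnion fun _ => measurableSet_setOf_exists_smul_mem (hS m))
  · intro x
    have hex : ∃ n, ∃ h : H, h • x ∈ S n := by
      obtain ⟨h, hh⟩ := hcover x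
      obtain ⟨n, hn⟩ := mem_iUnion.1 hh
      exact ⟨n, h, hn⟩
    obtain ⟨h, hh⟩ := Nat.find_spec hex
    obtain ⟨k, -, hk⟩ := exists_smul_mem_lexMinimalPart hK hK1 hφ (hS _) (hsep _) hh
    refine ⟨k * h, mem_iUnion.2 ⟨Nat.find hex, by rwa [mul_smul], ?_⟩⟩
    simp only [mem_iUnion, not_exists]
    rintro m hm ⟨g, hg⟩
    exact Nat.find_min hex hm ⟨g * (k * h), by rwa [mul_smul]⟩
  · intro y hy v hv hvy
    obtain ⟨n, hyM, hyn⟩ := mem_iUnion.1 hy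
    obtain ⟨n', hvyM, hvyn⟩ := mem_iUnion.1 hvy
    obtain rfl : n = n' := by
      by_contra hne
      rcases lt_or_gt_of_ne hne with h | h
      · exact hvyn (mem_iUnion₂.2 ⟨n, h, v⁻¹, by rw [inv_smul_smul]; exact hyM.1⟩)
      · exact hyn (mem_iUnion₂.2 ⟨n', h, v, hvyM.1⟩)
    exact smul_eq_self_of_mem_lexMinimalPart hKinv hφinj hv hyM hvyM

end Selection

section Valley

variable {H X : Type*} [Group H] [MetricSpace X] [MulAction H X]

def valley (K : Set H) (q : X) (ε : ℝ) : Set X :=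
  {x | ∀ g ∈ K * K, (∃ k ∈ K, k • x = g • x) ∨ dist x q + ε ≤ dist (g • x) q}

lemma exists_smul_eq_of_mem_valley {K : Set H} (hKinv : K⁻¹ ⊆ K) {q : X} {ε : ℝ} (hε : 0 < ε)
    {x : X} {g : H} (hg : g ∈ K * K) (hx : x ∈ valley K q ε) (hgx : g • x ∈ valley K q ε) :
    ∃ k ∈ K, k • x = g • x := by
  by_contra hno
  have hginv : g⁻¹ ∈ K * K := by
    have : g⁻¹ ∈ K⁻¹ * K⁻¹ := by rwa [← mul_inv_rev, inv_mem_inv]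
    exact mul_subset_mul hKinv hKinv this
  have hup : dist x q + ε ≤ dist (g • x) q := (hx g hg).resolve_left hno
  have hdown : dist (g • x) q + ε ≤ dist x q := by
    rcases hgx g⁻¹ hginv with ⟨k, hk, hkg⟩ | hle
    · rw [inv_smul_smul] at hkg
      exact absurd ⟨k⁻¹, hKinv (inv_mem_inv.2 hk), (eq_inv_smul_iff.2 hkg).symm⟩ hno
    · rwa [inv_smul_smul] at hle
  linarith

variable [TopologicalSpace H] [ContinuousSMul H X]

lemma isClosed_valley {K : Set H} (hK : IsCompact K) (q : X) (ε : ℝ) :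
    IsClosed (valley K q ε) := by
  simp only [valley, ofPred_forall, ofPred_or]
  refine isClosed_iInter fun g => isClosed_iInter fun _ => .union ?_ ?_
  · exact hK.isClosed_setOf_exists_mem (P := fun k x => k • x = g • x)
      (isClosed_eq continuous_smul (continuous_snd.const_smul g))
  · exact isClosed_le (continuous_id.dist continuous_const |>.add continuous_const)
      ((continuous_const_smul g).dist continuous_const)

variable [IsTopologicalGroup H]

lemma exists_pos_forall_exists_smul_eq_or_le_dist {V L : Set H} (hV : IsOpen V)
    (hV1 : (1 : H) ∈ V) (hL : IsCompact L) (x : X) :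
    ∃ ε > 0, ∀ g ∈ L, (∃ v ∈ V, v • x = g • x) ∨ ε ≤ dist x (g • x) := by
  set O : Set H := {g | ∃ v ∈ V, v • x = g • x}
  have hO : IsOpen O := by
    convert hV.mul_right (t := (MulAction.stabilizer H x : Set H)) using 1
    ext g
    simp only [O, mem_ofPred_eq, mem_mul, SetLike.mem_coe, MulAction.mem_stabilizer_iff]
    constructor
    · rintro ⟨v, hv, hvg⟩
      exact ⟨v, hv, v⁻¹ * g, by rw [mul_smul, ← hvg, inv_smul_smul], mul_inv_cancel_left v g⟩
    · rintro ⟨v, hv, s, hs, rfl⟩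
      exact ⟨v, hv, by rw [mul_smul, hs]⟩
  have hpos : ∀ g ∈ L \ O, 0 < dist x (g • x) := by
    rintro g ⟨-, hgO⟩
    refine dist_pos.2 fun hxg => hgO ⟨1, hV1, ?_⟩
    rw [one_smul, ← hxg]
  obtain ⟨ε, hε, hle⟩ := (hL.diff hO).exists_forall_le'
    (continuous_const.dist (continuous_id.smul continuous_const)).continuousOn hpos
  refine ⟨ε, hε, fun g hg => ?_⟩
  by_cases hgO : g ∈ O
  · exact .inl hgO
  · exact .inr (hle g ⟨hg, hgO⟩)

lemma DenseRange.exists_mem_valley {q : ℕ → X} (hq : DenseRange q) {K V : Set H}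
    (hK : IsCompact K) (hV : IsOpen V) (hV1 : (1 : H) ∈ V) (hVK : V ⊆ K) (x : X) :
    ∃ i m : ℕ, x ∈ valley K (q i) (1 / (m + 1)) := by
  obtain ⟨ε, hε, hsep⟩ := exists_pos_forall_exists_smul_eq_or_le_dist hV hV1 (hK.mul hK) x
  obtain ⟨i, hi⟩ := Metric.denseRange_iff.1 hq x (ε / 4) (by linarith)
  obtain ⟨m, hm⟩ := exists_nat_one_div_lt (show 0 < ε / 2 by linarith)
  refine ⟨i, m, fun g hg => ?_⟩
  rcases hsep g hg with ⟨v, hv, hvg⟩ | hfar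
  · exact .inl ⟨v, hVK hv, hvg⟩
  · right
    linarith [dist_triangle x (q i) (g • x), dist_comm (q i) (g • x)]

end Valley

/-- Theorem A specialized to a continuous action of a second countable locally compact
group `H` on a second countable locally compact Hausdorff space `X`: there is a Borel
set `Y ⊆ X` and an open neighborhood `V` of the identity of `H` such that `Y` meets
every orbit and `Y` is `V`-lacunary. -/
theorem stmt_0 {H X : Type*} [TopologicalSpace H] [Group H] [IsTopologicalGroup H]
    [SecondCountableTopology H] [LocallyCompactSpace H]
    [TopologicalSpace X] [SecondCountableTopology X] [LocallyCompactSpace X] [T2Space X]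
    [MulAction H X] [ContinuousSMul H X]
    [MeasurableSpace X] [BorelSpace X] :
    ∃ (Y : Set X) (V : Set H), MeasurableSet Y ∧ IsOpen V ∧ (1 : H) ∈ V ∧
      (∀ x : X, ∃ h : H, h • x ∈ Y) ∧
      (∀ y ∈ Y, ∀ v ∈ V, v • y ∈ Y → v • y = y) := by
  rcases isEmpty_or_nonempty X with hX | hX
  · exact ⟨∅, univ, .empty, isOpen_univ, mem_univ _, isEmptyElim, fun _ h => h.elim⟩
  let : MetricSpace X := TopologicalSpace.metrizableSpaceMetric X
  obtain ⟨q, hq⟩ := TopologicalSpace.exists_dense_seq X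
  obtain ⟨C, hC, hC1⟩ := exists_compact_mem_nhds (1 : H)
  have hV1 : (1 : H) ∈ interior C := mem_interior_iff_mem_nhds.2 hC1
  have hVK : interior C ⊆ C ∪ C⁻¹ := interior_subset.trans subset_union_left
  have hKinv : (C ∪ C⁻¹)⁻¹ ⊆ C ∪ C⁻¹ := by rw [union_inv, inv_inv, union_comm]
  have hK : IsCompact (C ∪ C⁻¹) := hC.union hC.inv
  obtain ⟨Y, hY, hYcomplete, hYlacunary⟩ :=
    exists_measurableSet_isCompleteSection_isLacunary hK (hVK hV1) hKinv
      (continuous_pi fun i => continuous_id.dist continuous_const) hq.injective_fun_dist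
      (S := fun n => valley (C ∪ C⁻¹) (q n.unpair.1) (1 / (n.unpair.2 + 1)))
      (fun n => isClosed_valley hK _ _)
      (fun x => by
        obtain ⟨i, m, hx⟩ := hq.exists_mem_valley hK isOpen_interior hV1 hVK x
        exact ⟨1, mem_iUnion.2 ⟨Nat.pair i m, by simpa using hx⟩⟩)
      (fun n x hx g hg hgx => exists_smul_eq_of_mem_valley hKinv (by positivity) hg hx hgx)
  exact ⟨Y, interior C, hY, isOpen_interior, hV1, hYcomplete, hYlacunary.mono hVK⟩
end

section
/- Let H be a second countable topological group acting continuously on a topological space X, let V be an open neighborhood of the identity of H, and let Y ⊆ X be a set such that for every y ∈ Y and every v ∈ V, if v • y ∈ Y then v • y = y. Then for every x ∈ X, the intersection of Y with the orbit {h • x : h ∈ H} is countable. -/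
/-!
Choose for each point `z` of `Y` on the orbit of `x` some `σ z` with `σ z • x = z`. If
`σ z * (σ w)⁻¹ ∈ V` then this element moves `w ∈ Y` to `z ∈ Y`, so lacunarity forces `z = w`:
the set `σ '' (Y ∩ H • x)` is `V`-separated. In a separable group a `V`-separated set is
countable, since for `W / W ⊆ V` the open sets `{g | a / g ∈ W}` are pairwise disjoint.
-/

open Topology

theorem Set.countable_of_mul_inv_mem_imp_eq {H : Type*} [TopologicalSpace H] [Group H]
    [IsTopologicalGroup H] [TopologicalSpace.SeparableSpace H] {V : Set H} (hV : V ∈ 𝓝 1)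
    {A : Set H} (hA : ∀ a ∈ A, ∀ b ∈ A, a * b⁻¹ ∈ V → a = b) : A.Countable := by
  obtain ⟨W, hW, hWV⟩ := exists_nhds_split_inv hV
  have hW₁ : (1 : H) ∈ interior W := mem_interior_iff_mem_nhds.mpr hW
  refine Set.PairwiseDisjoint.countable_of_isOpen (s := fun a : H => (a / ·) ⁻¹' interior W)
    ?_ (fun a _ => isOpen_interior.preimage (continuous_const.div' continuous_id))
    (fun a _ => ⟨a, by simpa using hW₁⟩)
  intro a ha b hb hab
  refine Set.disjoint_left.mpr fun g hga hgb => hab (hA a ha b hb ?_)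
  simpa [div_eq_mul_inv, mul_assoc] using
    hWV _ (interior_subset hga) _ (interior_subset hgb)

theorem stmt_1_general {H X : Type*} [TopologicalSpace H] [Group H] [IsTopologicalGroup H]
    [SecondCountableTopology H]
    [MulAction H X]
    (V : Set H) (hVopen : IsOpen V) (hV1 : (1 : H) ∈ V)
    (Y : Set X) (hY : ∀ y ∈ Y, ∀ v ∈ V, v • y ∈ Y → v • y = y) :
    ∀ x : X, (Y ∩ {z : X | ∃ h : H, h • x = z}).Countable := by
  intro x
  set S := Y ∩ {z : X | ∃ h : H, h • x = z}
  set σ : X → H := Function.invFun (· • x)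
  have hσ : ∀ z ∈ S, σ z • x = z := fun z hz => Function.invFun_eq hz.2
  have hsep : ∀ a ∈ σ '' S, ∀ b ∈ σ '' S, a * b⁻¹ ∈ V → a = b := by
    rintro _ ⟨z, hz, rfl⟩ _ ⟨w, hw, rfl⟩ hv
    have hzw : (σ z * (σ w)⁻¹) • w = z := calc
      _ = (σ z * (σ w)⁻¹) • σ w • x := by rw [hσ w hw]
      _ = σ z • x := by rw [smul_smul, inv_mul_cancel_right]
      _ = z := hσ z hz
    have hfix := hY w hw.1 _ hv (by rw [hzw]; exact hz.1)
    rw [hzw.symm.trans hfix]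
  have hσS : S ⊆ (· • x) '' (σ '' S) := fun z hz => ⟨σ z, Set.mem_image_of_mem σ hz, hσ z hz⟩
  exact ((Set.countable_of_mul_inv_mem_imp_eq (hVopen.mem_nhds hV1) hsep).image _).mono hσS

/-- A lacunary section is a countable section, in the transformation-group case: if `Y`
is `V`-lacunary for an open neighborhood `V` of the identity of a second countable
topological group `H` acting continuously on `X`, then `Y` meets every orbit in a
countable set. -/
theorem stmt_1 {H X : Type*} [TopologicalSpace H] [Group H] [IsTopologicalGroup H]
    [SecondCountableTopology H]
    [TopologicalSpace X] [MulAction H X] [ContinuousSMul H X]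
    (V : Set H) (hVopen : IsOpen V) (hV1 : (1 : H) ∈ V)
    (Y : Set X) (hY : ∀ y ∈ Y, ∀ v ∈ V, v • y ∈ Y → v • y = y) :
    ∀ x : X, (Y ∩ {z : X | ∃ h : H, h • x = z}).Countable :=
  stmt_1_general V hVopen hV1 Y hY
end

section
/- Let H be a metric space that is also a topological group (with the metric topology) acting continuously on a Hausdorff topological space X. Fix h ∈ H and a real number a > 0 such that the closed ball of radius 2a centered at h is compact. Then the function x ↦ min(a, infDist(h, Stab(x))) from X to ℝ is lower semicontinuous, where Stab(x) = {k ∈ H : k • x = x} and infDist(h, S) denotes the infimum of distances from h to points of S. -/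
/-!
If `r < infDist h (Stab x₀)` then no point of the closed ball `B(h, r)` fixes `x₀`. Since the
fixed-point relation `k • x = x` is closed in `H × X` and `B(h, r)` is compact (for `r < a`),
the tube lemma gives a neighbourhood of `x₀` on which no point of `B(h, r)` fixes `x`, and there
`infDist h (Stab x) ≥ r`.
-/

open Metric Filter Topology

section Action

variable {H X : Type*} [TopologicalSpace H] [TopologicalSpace X] [T2Space X]
  [SMul H X] [ContinuousSMul H X]

theorem eventually_forall_smul_ne_of_isCompact {K : Set H} (hK : IsCompact K) {x₀ : X}
    (hx₀ : ∀ k ∈ K, k • x₀ ≠ x₀) : ∀ᶠ x in 𝓝 x₀, ∀ k ∈ K, k • x ≠ x := by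
  have hopen : IsOpen {p : X × H | p.2 • p.1 ≠ p.1} :=
    (isClosed_eq (continuous_snd.smul continuous_fst) continuous_fst).isOpen_compl
  exact hK.eventually_forall_of_forall_eventually fun k hk => hopen.mem_nhds (hx₀ k hk)

end Action

section Metric

variable {H X : Type*} [MetricSpace H] [Monoid H] [TopologicalSpace X] [T2Space X]
  [MulAction H X] [ContinuousSMul H X]

theorem eventually_le_infDist_setOf_smul_eq {h : H} {r : ℝ} (hK : IsCompact (closedBall h r))
    {x₀ : X} (hr : r < infDist h {k : H | k • x₀ = x₀}) :
    ∀ᶠ x in 𝓝 x₀, r ≤ infDist h {k : H | k • x = x} := by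
  have hx₀ : ∀ k ∈ closedBall h r, k • x₀ ≠ x₀ := fun k hk hfix =>
    (infDist_le_dist_of_mem (x := h) hfix).not_gt
      (by rw [dist_comm]; exact (mem_closedBall.mp hk).trans_lt hr)
  filter_upwards [eventually_forall_smul_ne_of_isCompact hK hx₀] with x hx
  refine (le_infDist ⟨1, one_smul H x⟩).mpr fun k hk => ?_
  by_contra! hlt
  exact hx k (mem_closedBall.mpr (by rw [dist_comm]; exact hlt.le)) hk

end Metric

theorem isCompact_closedBall_of_lt {H : Type*} [PseudoMetricSpace H] {h : H} {a r : ℝ}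
    (hball : IsCompact (closedBall h (2 * a))) (hr : r < a) : IsCompact (closedBall h r) := by
  rcases lt_or_ge r 0 with hr0 | hr0
  · rw [closedBall_eq_empty.mpr hr0]
    exact isCompact_empty
  · exact hball.of_isClosed_subset isClosed_closedBall (closedBall_subset_closedBall (by linarith))

theorem stmt_3_general {H X : Type*} [MetricSpace H] [Group H]
    [TopologicalSpace X] [T2Space X] [MulAction H X] [ContinuousSMul H X]
    (h : H) (a : ℝ) (hball : IsCompact (Metric.closedBall h (2 * a))) :
    LowerSemicontinuous fun x : X => min a (Metric.infDist h {k : H | k • x = x}) := by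
  intro x₀ c hc
  obtain ⟨r, hcr, hr⟩ := exists_between hc
  have hra : r < a := hr.trans_le (min_le_left _ _)
  filter_upwards [eventually_le_infDist_setOf_smul_eq (isCompact_closedBall_of_lt hball hra)
    (hr.trans_le (min_le_right _ _))] with x hx
  exact hcr.trans_le (le_min hra.le hx)

/-- If `H` is a metric group acting continuously on a Hausdorff space `X`, `h ∈ H`,
and `a > 0` is such that the closed ball of radius `2a` around `h` is compact, then
`x ↦ min a (infDist h (Stab x))` is lower semicontinuous. -/
theorem stmt_3 {H X : Type*} [MetricSpace H] [Group H] [IsTopologicalGroup H]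
    [TopologicalSpace X] [T2Space X] [MulAction H X] [ContinuousSMul H X]
    (h : H) (a : ℝ) (ha : 0 < a) (hball : IsCompact (Metric.closedBall h (2 * a))) :
    LowerSemicontinuous fun x : X => min a (Metric.infDist h {k : H | k • x = x}) :=
  stmt_3_general h a hball
end

section
/- Let H be a metric space that is also a topological group (with the metric topology) acting continuously on a second countable locally compact Hausdorff topological space X. Let (h_n) be a sequence in H and (a_n) a sequence of positive real numbers such that for every n the closed ball of radius 2·a_n centered at h_n is compact. Then the set of points x ∈ X at which, for every n, the function y ↦ min(a_n, infDist(h_n, Stab(y))) is continuous, is a dense G_δ subset of X. -/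
/-!
The function `y ↦ min a (infDist h (Stab y))` is lower semicontinuous: for `c < a`, the sublevel
set `{y | ... ≤ c}` is the intersection over `r ∈ (c, a)` of the sets of `y` fixed by some element
of the compact ball `closedBall h r`, and each of these is closed, being the projection along a
compact factor of the closed set `{(k, y) | k • y = y}` (here `X` Hausdorff is used). The points of
continuity of a lower semicontinuous real function form a residual set, since a point of
discontinuity lies on the frontier of one of the countably many open sets `{y | q < f y}`,
`q ∈ ℚ`. Intersecting over `n` gives a residual `Gδ` set, which is dense by Baire's theorem for
locally compact Hausdorff spaces.
-/

open Metric Filter Set Topology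

theorem IsCompact.isClosed_setOf_exists_mem_prod {H X : Type*} [TopologicalSpace H]
    [TopologicalSpace X] {K : Set H} (hK : IsCompact K) {C : Set (H × X)} (hC : IsClosed C) :
    IsClosed {y | ∃ k ∈ K, (k, y) ∈ C} := by
  have : CompactSpace K := isCompact_iff_compactSpace.1 hK
  have hproj : {y | ∃ k ∈ K, (k, y) ∈ C} =
      Prod.snd '' ((fun p : K × X => ((p.1 : H), p.2)) ⁻¹' C) := by
    ext y; simp
  rw [hproj]
  exact isClosedMap_snd_of_compactSpace _ (hC.preimage (by fun_prop))

theorem LowerSemicontinuous.isMeagre_setOf_not_continuousAt {X : Type*} [TopologicalSpace X]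
    {f : X → ℝ} (hf : LowerSemicontinuous f) : IsMeagre {x | ¬ContinuousAt f x} := by
  have hfrontier : ∀ q : ℚ, IsNowhereDense (frontier {y | (q : ℝ) < f y}) := fun q => by
    rw [isClosed_frontier.isNowhereDense_iff, ← frontier_compl]
    exact interior_frontier (hf.isOpen_preimage q).isClosed_compl
  refine (isMeagre_iUnion fun q => (hfrontier q).isMeagre).mono fun x hx => ?_
  have hnot_usc : ¬UpperSemicontinuousAt f x := fun husc =>
    hx (continuousAt_iff_lower_upperSemicontinuousAt.2 ⟨hf x, husc⟩)
  obtain ⟨b, hxb, hb⟩ : ∃ b, f x < b ∧ ∃ᶠ y in 𝓝 x, b ≤ f y := by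
    simpa [upperSemicontinuousAt_iff, Filter.not_eventually] using hnot_usc
  obtain ⟨q, hxq, hqb⟩ := exists_rat_btwn hxb
  refine mem_iUnion.2 ⟨q, mem_closure_iff_frequently.2 (hb.mono fun y hy => hqb.trans_le hy),
    fun hq => ?_⟩
  have hqx : x ∈ {y | (q : ℝ) < f y} := interior_subset hq
  exact hxq.not_gt hqx

theorem lowerSemicontinuous_min_infDist {H X : Type*} [PseudoMetricSpace H]
    [TopologicalSpace X] {F : X → Set H} (hF : IsClosed {p : H × X | p.1 ∈ F p.2})
    (hne : ∀ y, (F y).Nonempty) {h : H} {a : ℝ} (hK : IsCompact (closedBall h a)) :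
    LowerSemicontinuous fun y => min a (infDist h (F y)) := by
  refine lowerSemicontinuous_iff_isClosed_preimage.2 fun c => ?_
  rcases le_or_gt a c with hac | hca
  · convert isClosed_univ
    exact eq_univ_of_forall fun y => (min_le_left _ _).trans hac
  have hpre : (fun y => min a (infDist h (F y))) ⁻¹' Iic c =
      ⋂ r ∈ Ioo c a, {y | ∃ k ∈ closedBall h r, k ∈ F y} := by
    ext y
    simp only [mem_preimage, mem_Iic, min_le_iff, hca.not_ge, false_or, mem_iInter, mem_Ioo,
      mem_ofPred_eq, mem_closedBall]
    constructor
    · rintro hy r ⟨hcr, -⟩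
      obtain ⟨k, hk, hdist⟩ := (infDist_lt_iff (hne y)).1 (hy.trans_lt hcr)
      exact ⟨k, by rw [dist_comm]; exact hdist.le, hk⟩
    · intro hy
      refine le_of_forall_gt_imp_ge_of_dense fun r hcr => ?_
      obtain ⟨k, hkr, hk⟩ := hy (min r ((c + a) / 2)) ⟨lt_min hcr (by linarith), by
        linarith [min_le_right r ((c + a) / 2)]⟩
      calc infDist h (F y) ≤ dist h k := infDist_le_dist_of_mem hk
        _ ≤ r := by rw [dist_comm]; exact hkr.trans (min_le_left _ _)
  rw [hpre]
  exact isClosed_biInter fun r hr => (hK.of_isClosed_subset isClosed_closedBall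
    (closedBall_subset_closedBall hr.2.le)).isClosed_setOf_exists_mem_prod hF

theorem lowerSemicontinuous_min_infDist_stabilizer {H X : Type*} [PseudoMetricSpace H] [Monoid H]
    [TopologicalSpace X] [T2Space X] [MulAction H X] [ContinuousSMul H X] {h : H} {a : ℝ}
    (hK : IsCompact (closedBall h a)) :
    LowerSemicontinuous fun y : X => min a (infDist h {k : H | k • y = y}) :=
  lowerSemicontinuous_min_infDist (F := fun y => {k : H | k • y = y})
    (isClosed_eq continuous_smul continuous_snd)
    (fun _ => ⟨1, one_smul _ _⟩) hK

theorem stmt_5_general {H X : Type*} [MetricSpace H] [Group H]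
    [TopologicalSpace X] [LocallyCompactSpace X] [T2Space X]
    [MulAction H X] [ContinuousSMul H X]
    (h : ℕ → H) (a : ℕ → ℝ) (ha : ∀ n, 0 < a n)
    (hball : ∀ n, IsCompact (Metric.closedBall (h n) (2 * a n))) :
    Dense {x : X | ∀ n : ℕ,
        ContinuousAt (fun y : X => min (a n) (Metric.infDist (h n) {k : H | k • y = y})) x} ∧
    IsGδ {x : X | ∀ n : ℕ,
        ContinuousAt (fun y : X => min (a n) (Metric.infDist (h n) {k : H | k • y = y})) x} := by
  have hlsc : ∀ n, LowerSemicontinuous fun y : X =>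
      min (a n) (infDist (h n) {k : H | k • y = y}) := fun n =>
    lowerSemicontinuous_min_infDist_stabilizer <| (hball n).of_isClosed_subset isClosed_closedBall
      (closedBall_subset_closedBall (by linarith [ha n]))
  rw [ofPred_forall]
  refine ⟨dense_of_mem_residual (countable_iInter_mem.2 fun n => ?_),
    .iInter fun n => .setOfPred_continuousAt _⟩
  simpa [IsMeagre, compl_ofPred] using (hlsc n).isMeagre_setOf_not_continuousAt

/-- Lemma 2 in the transformation-group case: for a metric group `H` acting
continuously on a second countable locally compact Hausdorff space `X`, and sequences
`(h n)` in `H` and `(a n)` of positive reals with the closed ball of radius `2 * a n`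
around `h n` compact, the set of simultaneous continuity points of all the functions
`y ↦ min (a n) (infDist (h n) (Stab y))` is a dense `Gδ`. -/
theorem stmt_5 {H X : Type*} [MetricSpace H] [Group H] [IsTopologicalGroup H]
    [TopologicalSpace X] [SecondCountableTopology X] [LocallyCompactSpace X] [T2Space X]
    [MulAction H X] [ContinuousSMul H X]
    (h : ℕ → H) (a : ℕ → ℝ) (ha : ∀ n, 0 < a n)
    (hball : ∀ n, IsCompact (Metric.closedBall (h n) (2 * a n))) :
    Dense {x : X | ∀ n : ℕ,
        ContinuousAt (fun y : X => min (a n) (Metric.infDist (h n) {k : H | k • y = y})) x} ∧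
    IsGδ {x : X | ∀ n : ℕ,
        ContinuousAt (fun y : X => min (a n) (Metric.infDist (h n) {k : H | k • y = y})) x} :=
  stmt_5_general h a ha hball
end

section
/- Let H be a topological group acting continuously on a topological space X, let x ∈ X, write Stab(x) = {k ∈ H : k • x = x}, and let I = {(h, y) ∈ H × X : h • y = y} (the isotropy bundle, with the subspace topology of H × X). Then the following are equivalent: (ii) for every k ∈ Stab(x) and every neighborhood W of (k, x) in I, the set {y ∈ X : ∃ h, (h, y) ∈ W} is a neighborhood of x in X; (iii) for every k ∈ Stab(x) and every open set U ⊆ H × X containing (k, x), the set {(k' * h, y) : (h, y) ∈ U and k' • (h • y) = h • y} contains Stab(x) × {x} in its interior in H × X. -/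
open Topology

/-!
Rewriting `k' * h` as `g * m`, a point `(g, y)` lies in `G'U` iff `(g * m, y) ∈ U` for some `m`
fixing `y`, i.e. iff `y` lies in the projection of `I ∩ g⁻¹U`. Joint continuity of
`(g, m) ↦ g * m` lets `g` vary in a neighbourhood, so (ii) at `(k''⁻¹ * k, x)` makes `G'U` a
neighbourhood of `(k'', x)`; conversely the slice of `interior G'U` over `g = 1` is a neighbourhood
of `x` contained in the projection of `U ∩ I`.
-/

/-- The product `G'U` of the isotropy bundle with `U` in the transformation groupoid `H × X`. -/
def isotropyMul {H X : Type*} [Group H] [MulAction H X] (U : Set (H × X)) : Set (H × X) :=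
  {p | ∃ (k' h : H) (y : X), (h, y) ∈ U ∧ k' • (h • y) = h • y ∧ p = (k' * h, y)}

/- `k'` fixes `h • y` exactly when `h⁻¹ * k'⁻¹ * h` fixes `y`. -/
lemma mem_isotropyMul_iff {H X : Type*} [Group H] [MulAction H X] {U : Set (H × X)}
    {p : H × X} : p ∈ isotropyMul U ↔ ∃ m : H, m • p.2 = p.2 ∧ (p.1 * m, p.2) ∈ U := by
  obtain ⟨g, y⟩ := p
  constructor
  · rintro ⟨k', h, y, hU, hfix, ⟨⟩⟩
    refine ⟨h⁻¹ * k'⁻¹ * h, ?_, by simpa [mul_assoc] using hU⟩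
    rw [mul_smul, mul_smul, inv_smul_eq_iff.mpr hfix.symm, inv_smul_smul]
  · rintro ⟨m, hfix, hU⟩
    have hfix' : m⁻¹ • y = y := inv_smul_eq_iff.mpr hfix.symm
    refine ⟨g * m⁻¹ * g⁻¹, g * m, y, hU, ?_, by simp [mul_assoc]⟩
    simp only [mul_smul, hfix, inv_smul_smul, hfix']

lemma setOf_exists_mul_mem_mem_nhds {H X : Type*} [TopologicalSpace H] [Mul H] [ContinuousMul H]
    [TopologicalSpace X] {I U : Set (H × X)} {g₀ m₀ : H} {x : X}
    (hU : U ∈ 𝓝 (g₀ * m₀, x))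
    (hproj : ∀ B ∈ 𝓝 (m₀, x), {y : X | ∃ m : H, (m, y) ∈ I ∩ B} ∈ 𝓝 x) :
    {p : H × X | ∃ m : H, (m, p.2) ∈ I ∧ (p.1 * m, p.2) ∈ U} ∈ 𝓝 (g₀, x) := by
  have hcont : ContinuousAt (fun q : H × (H × X) => (q.1 * q.2.1, q.2.2)) (g₀, (m₀, x)) := by
    fun_prop
  obtain ⟨A, hA, B, hB, hAB⟩ := mem_nhds_prod_iff.mp (hcont.preimage_mem_nhds hU)
  refine Filter.mem_of_superset (prod_mem_nhds hA (hproj B hB)) ?_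
  rintro ⟨g, y⟩ ⟨hg, m, hmI, hmB⟩
  exact ⟨m, hmI, hAB (Set.mk_mem_prod hg hmB)⟩

theorem stmt_6_general {H X : Type*} [TopologicalSpace H] [Group H] [IsTopologicalGroup H]
    [TopologicalSpace X] [MulAction H X] (x : X) :
    (∀ k : H, k • x = x →
        ∀ W : Set (H × X), W ⊆ {p : H × X | p.1 • p.2 = p.2} →
          W ∈ 𝓝[{p : H × X | p.1 • p.2 = p.2}] (k, x) →
          {y : X | ∃ h : H, (h, y) ∈ W} ∈ 𝓝 x) ↔
    (∀ k : H, k • x = x →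
        ∀ U : Set (H × X), IsOpen U → (k, x) ∈ U →
          ∀ k'' : H, k'' • x = x →
            (k'', x) ∈ interior {p : H × X | ∃ (k' h : H) (y : X),
              (h, y) ∈ U ∧ k' • (h • y) = h • y ∧ p = (k' * h, y)}) := by
  constructor
  · intro hii k hk U hU hkU k'' hk''
    have hstab : (k''⁻¹ * k) • x = x :=
      (MulAction.stabilizer H x).mul_mem (Subgroup.inv_mem _ hk'') hk
    have hnhds := setOf_exists_mul_mem_mem_nhds (I := {p : H × X | p.1 • p.2 = p.2})
      (hU.mem_nhds (by rwa [mul_inv_cancel_left])) fun B hB =>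
        hii _ hstab _ Set.inter_subset_left (inter_mem_nhdsWithin _ hB)
    exact mem_interior_iff_mem_nhds.mpr
      (Filter.mem_of_superset hnhds fun p hp => mem_isotropyMul_iff.mpr hp)
  · intro hiii k hk W _ hW
    obtain ⟨U, hU, hkU, hUW⟩ := mem_nhdsWithin.mp hW
    have hinterior : {y : X | ((1 : H), y) ∈ interior (isotropyMul U)} ∈ 𝓝 x :=
      (continuous_const.prodMk continuous_id).continuousAt.preimage_mem_nhds
        (isOpen_interior.mem_nhds (hiii k hk U hU hkU 1 (one_smul H x)))
    refine Filter.mem_of_superset hinterior fun y hy => ?_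
    obtain ⟨m, hfix, hmU⟩ := mem_isotropyMul_iff.mp (interior_subset hy)
    exact ⟨m, hUW ⟨by simpa using hmU, hfix⟩⟩

/-- Lemma 3, equivalence of (ii) and (iii), in the transformation-group case. Here
`I = {(h, y) : h • y = y}` is the isotropy bundle of the transformation groupoid.
Condition (ii): for every `k ∈ Stab x`, every neighborhood `W` of `(k, x)` in `I`
(subspace topology) projects to a neighborhood of `x` in `X`.
Condition (iii): for every `k ∈ Stab x` and every open `U ⊆ H × X` containing `(k, x)`,
the set `G'U = {(k' * h, y) : (h, y) ∈ U, k' • (h • y) = h • y}` contains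
`Stab x × {x}` in its interior. -/
theorem stmt_6 {H X : Type*} [TopologicalSpace H] [Group H] [IsTopologicalGroup H]
    [TopologicalSpace X] [MulAction H X] [ContinuousSMul H X] (x : X) :
    (∀ k : H, k • x = x →
        ∀ W : Set (H × X), W ⊆ {p : H × X | p.1 • p.2 = p.2} →
          W ∈ 𝓝[{p : H × X | p.1 • p.2 = p.2}] (k, x) →
          {y : X | ∃ h : H, (h, y) ∈ W} ∈ 𝓝 x) ↔
    (∀ k : H, k • x = x →
        ∀ U : Set (H × X), IsOpen U → (k, x) ∈ U →
          ∀ k'' : H, k'' • x = x →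
            (k'', x) ∈ interior {p : H × X | ∃ (k' h : H) (y : X),
              (h, y) ∈ U ∧ k' • (h • y) = h • y ∧ p = (k' * h, y)}) :=
  stmt_6_general x
end

section
/- Let H be a topological group acting continuously on a locally compact Hausdorff topological space X, let K ⊆ H × X be compact, let x ∈ X, and let N ⊆ H × X be an open set containing {(h, y) ∈ K : y = x and h • y = x}. Then there exists a neighborhood V of x in X such that {(h, y) ∈ K : y ∈ V and h • y ∈ V} ⊆ N. -/
open Topology

theorem IsCompact.exists_mem_nhds_inter_preimage_subset {α Z : Type*} [TopologicalSpace α]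
    [TopologicalSpace Z] [T2Space Z] {K N : Set α} (hK : IsCompact K) (hN : IsOpen N)
    {f : α → Z} (hf : ContinuousOn f K) {z : Z} (hz : K ∩ f ⁻¹' {z} ⊆ N) :
    ∃ U ∈ 𝓝 z, K ∩ f ⁻¹' U ⊆ N := by
  have hbad : IsCompact (f '' (K \ N)) :=
    (hK.diff hN).image_of_continuousOn (hf.mono Set.sdiff_subset)
  have hz_notMem : z ∉ f '' (K \ N) := by
    rintro ⟨p, ⟨hpK, hpN⟩, rfl⟩
    exact hpN (hz ⟨hpK, rfl⟩)
  refine ⟨(f '' (K \ N))ᶜ, hbad.isClosed.isOpen_compl.mem_nhds hz_notMem, ?_⟩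
  rintro p ⟨hpK, hpU⟩
  by_contra hpN
  exact hpU ⟨p, ⟨hpK, hpN⟩, rfl⟩

theorem stmt_7_general {H X : Type*} [TopologicalSpace H] [Group H]
    [TopologicalSpace X] [T2Space X]
    [MulAction H X] [ContinuousSMul H X]
    (K : Set (H × X)) (hK : IsCompact K) (x : X)
    (N : Set (H × X)) (hN : IsOpen N)
    (hsub : {p : H × X | p ∈ K ∧ p.2 = x ∧ p.1 • p.2 = x} ⊆ N) :
    ∃ V ∈ 𝓝 x, {p : H × X | p ∈ K ∧ p.2 ∈ V ∧ p.1 • p.2 ∈ V} ⊆ N := by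
  have hf : Continuous fun p : H × X => (p.2, p.1 • p.2) :=
    continuous_snd.prodMk (continuous_fst.smul continuous_snd)
  obtain ⟨U, hU, hUN⟩ := hK.exists_mem_nhds_inter_preimage_subset hN hf.continuousOn
    (z := (x, x)) fun p ⟨hpK, hpx⟩ => hsub ⟨hpK, congrArg Prod.fst hpx, congrArg Prod.snd hpx⟩
  rw [nhds_prod_eq] at hU
  obtain ⟨V, hV, hVU⟩ := Filter.mem_prod_same_iff.mp hU
  exact ⟨V, hV, fun p ⟨hpK, hp, hhp⟩ => hUN ⟨hpK, hVU ⟨hp, hhp⟩⟩⟩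

/-- Lemma 4 in the transformation-group case: if `K ⊆ H × X` is compact, `x ∈ X`, and
`N` is an open set containing `xKx = {(h, y) ∈ K : y = x ∧ h • y = x}`, then there is
a neighborhood `V` of `x` such that `VKV = {(h, y) ∈ K : y ∈ V ∧ h • y ∈ V} ⊆ N`. -/
theorem stmt_7 {H X : Type*} [TopologicalSpace H] [Group H] [IsTopologicalGroup H]
    [TopologicalSpace X] [LocallyCompactSpace X] [T2Space X]
    [MulAction H X] [ContinuousSMul H X]
    (K : Set (H × X)) (hK : IsCompact K) (x : X)
    (N : Set (H × X)) (hN : IsOpen N)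
    (hsub : {p : H × X | p ∈ K ∧ p.2 = x ∧ p.1 • p.2 = x} ⊆ N) :
    ∃ V ∈ 𝓝 x, {p : H × X | p ∈ K ∧ p.2 ∈ V ∧ p.1 • p.2 ∈ V} ⊆ N :=
  stmt_7_general K hK x N hN hsub
end

section
/- Let B be a compact metrizable topological space and let r be an equivalence relation on B whose graph {(a, b) ∈ B × B : a r b} is closed in B × B. Then there exists a Borel set T ⊆ B that is a transversal for r: for every b ∈ B there is exactly one t ∈ T with b r t. -/
section Aux

set_option linter.unusedSectionVars false

variable {B : Type*} [MetricSpace B] [CompactSpace B]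

/-- Strict lexicographic comparison of the distance sequences to a fixed sequence `x`. -/
private def lexLt (x : ℕ → B) (s t : B) : Prop :=
  ∃ n, (∀ j < n, dist s (x j) = dist t (x j)) ∧ dist s (x n) < dist t (x n)

private lemma eq_of_not_lexLt {x : ℕ → B} (hx : DenseRange x) {s t : B}
    (h1 : ¬ lexLt x s t) (h2 : ¬ lexLt x t s) : s = t := by
  have key : ∀ n, dist s (x n) = dist t (x n) := by
    intro n
    induction n using Nat.strong_induction_on with
    | _ n ih =>
      by_contra hne
      rcases lt_or_gt_of_ne hne with h | h
      · exact h1 ⟨n, fun j hj => ih j hj, h⟩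
      · exact h2 ⟨n, fun j hj => (ih j hj).symm, h⟩
  have hd : dist s t = 0 := by
    by_contra h0
    have hpos : 0 < dist s t := lt_of_le_of_ne dist_nonneg (Ne.symm h0)
    obtain ⟨k, hk⟩ := Metric.denseRange_iff.mp hx t (dist s t / 2) (by positivity)
    have htri : dist s t ≤ dist s (x k) + dist (x k) t := dist_triangle _ _ _
    rw [key k, dist_comm (x k) t] at htri
    linarith
  exact eq_of_dist_eq_zero hd

/-- The nested sequence of sets used to pick the lexicographically minimal point
of the equivalence class of `b`. -/
private def chain (r : B → B → Prop) (x : ℕ → B) (b : B) : ℕ → Set B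
  | 0 => {s | r b s}
  | n + 1 => {s ∈ chain r x b n | ∀ s' ∈ chain r x b n, dist s (x n) ≤ dist s' (x n)}

private lemma chain_isClosed (r : B → B → Prop) (x : ℕ → B) (b : B)
    (hclosed : IsClosed {p : B × B | r p.1 p.2}) (n : ℕ) : IsClosed (chain r x b n) := by
  induction n with
  | zero =>
    have : chain r x b 0 = (fun s => ((b, s) : B × B)) ⁻¹' {p : B × B | r p.1 p.2} := rfl
    rw [this]
    exact hclosed.preimage (by fun_prop)
  | succ n ih =>
    have : chain r x b (n + 1)
        = chain r x b n ∩ ⋂ s' ∈ chain r x b n, {s | dist s (x n) ≤ dist s' (x n)} := by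
      ext s
      simp [chain, Set.mem_iInter]
    rw [this]
    exact ih.inter (isClosed_biInter fun s' _ =>
      isClosed_le (by fun_prop) continuous_const)

private lemma chain_nonempty (r : B → B → Prop) (x : ℕ → B) (b : B) (hb : r b b)
    (hclosed : IsClosed {p : B × B | r p.1 p.2}) (n : ℕ) : (chain r x b n).Nonempty := by
  induction n with
  | zero => exact ⟨b, hb⟩
  | succ n ih =>
    obtain ⟨s, hs, hmin⟩ := ((chain_isClosed r x b hclosed n).isCompact).exists_isMinOn ih
      (f := fun s => dist s (x n)) (by fun_prop : Continuous fun s => dist s (x n)).continuousOn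
    exact ⟨s, hs, fun s' hs' => hmin hs'⟩

private lemma exists_lex_min (r : B → B → Prop) (x : ℕ → B) (hr : Equivalence r)
    (hclosed : IsClosed {p : B × B | r p.1 p.2}) (b : B) :
    ∃ t, r b t ∧ ∀ s, r b s → ¬ lexLt x s t := by
  have hne : (⋂ n, chain r x b n).Nonempty :=
    IsCompact.nonempty_iInter_of_sequence_nonempty_isCompact_isClosed _
      (fun n => fun s hs => hs.1)
      (chain_nonempty r x b (hr.refl b) hclosed)
      (chain_isClosed r x b hclosed 0).isCompact
      (chain_isClosed r x b hclosed)
  obtain ⟨t, ht⟩ := hne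
  have htmem : ∀ n, t ∈ chain r x b n := fun n => Set.mem_iInter.mp ht n
  refine ⟨t, htmem 0, ?_⟩
  rintro s hs ⟨n, heq, hlt⟩
  -- `s` belongs to `chain n`
  have hsmem : ∀ j, j ≤ n → s ∈ chain r x b j := by
    intro j
    induction j with
    | zero => exact fun _ => hs
    | succ j ih =>
      intro hjn
      have hj : j ≤ n := Nat.le_of_succ_le hjn
      refine ⟨ih hj, fun s' hs' => ?_⟩
      have h1 : dist s (x j) = dist t (x j) := heq j (Nat.lt_of_succ_le hjn)
      have h2 : dist t (x j) ≤ dist s' (x j) := (htmem (j + 1)).2 s' hs'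
      linarith
  have := (htmem (n + 1)).2 s (hsmem n le_rfl)
  linarith

end Aux

/-- Lemma 6(i): a closed equivalence relation on a compact metrizable space admits a
Borel transversal: a Borel set `T` meeting each equivalence class in exactly one
point. -/
theorem stmt_9 {B : Type*} [TopologicalSpace B] [CompactSpace B]
    [TopologicalSpace.MetrizableSpace B] [MeasurableSpace B] [BorelSpace B]
    (r : B → B → Prop) (hr : Equivalence r)
    (hclosed : IsClosed {p : B × B | r p.1 p.2}) :
    ∃ T : Set B, MeasurableSet T ∧ ∀ b : B, ∃! t : B, t ∈ T ∧ r b t := by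
  rcases isEmpty_or_nonempty B with hB | hB
  · exact ⟨∅, MeasurableSet.empty, fun b => (hB.elim b)⟩
  letI : MetricSpace B := TopologicalSpace.metrizableSpaceMetric B
  set x : ℕ → B := TopologicalSpace.denseSeq B with hxdef
  have hx : DenseRange x := TopologicalSpace.denseRange_denseSeq B
  set T : Set B := {t | ∀ s, r t s → ¬ lexLt x s t} with hTdef
  have hTmem : ∀ t, t ∈ T ↔ ∀ s, r t s → ¬ lexLt x s t := fun t => Iff.rfl
  refine ⟨T, ?_, ?_⟩
  · -- Measurability of T
    have hcompl : Tᶜ = ⋃ n, ⋃ q : ℚ, ({t | (q : ℝ) < dist t (x n)} ∩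
        (Prod.fst '' {p : B × B | r p.1 p.2 ∧ (∀ j < n, dist p.2 (x j) = dist p.1 (x j)) ∧
          dist p.2 (x n) ≤ (q : ℝ)})) := by
      ext t
      simp only [Set.mem_compl_iff, Set.mem_iUnion, Set.mem_inter_iff, Set.mem_image,
        Set.mem_setOf_eq, hTmem]
      constructor
      · intro ht
        push_neg at ht
        obtain ⟨s, hrs, n, heq, hlt⟩ := ht
        obtain ⟨q, hq1, hq2⟩ := exists_rat_btwn hlt
        exact ⟨n, q, hq2, ⟨(t, s), ⟨hrs, heq, le_of_lt hq1⟩, rfl⟩⟩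
      · rintro ⟨n, q, hq, ⟨p, ⟨hp1, hp2, hp3⟩, hfst⟩⟩
        intro hT
        refine hT p.2 (by rw [← hfst]; exact hp1) ⟨n, ?_, ?_⟩
        · intro j hj; rw [hfst] at hp2; exact hp2 j hj
        · linarith
    have : MeasurableSet Tᶜ := by
      rw [hcompl]
      refine MeasurableSet.iUnion fun n => MeasurableSet.iUnion fun q => ?_
      refine MeasurableSet.inter ?_ ?_
      · exact (isOpen_lt continuous_const (by fun_prop)).measurableSet
      · have hS : IsClosed {p : B × B | r p.1 p.2 ∧
            (∀ j < n, dist p.2 (x j) = dist p.1 (x j)) ∧ dist p.2 (x n) ≤ (q : ℝ)} := by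
          have : {p : B × B | r p.1 p.2 ∧
              (∀ j < n, dist p.2 (x j) = dist p.1 (x j)) ∧ dist p.2 (x n) ≤ (q : ℝ)}
              = {p : B × B | r p.1 p.2} ∩
                ((⋂ j ∈ Set.Iio n, {p : B × B | dist p.2 (x j) = dist p.1 (x j)}) ∩
                  {p : B × B | dist p.2 (x n) ≤ (q : ℝ)}) := by
            ext p
            simp [Set.mem_iInter, and_assoc]
          rw [this]
          exact hclosed.inter
            ((isClosed_biInter fun j _ => isClosed_eq (by fun_prop) (by fun_prop)).inter
              (isClosed_le (by fun_prop) continuous_const))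
        exact ((hS.isCompact.image continuous_fst).isClosed).measurableSet
    simpa using this.compl
  · -- Transversal property
    intro b
    obtain ⟨t, hbt, hmin⟩ := exists_lex_min r x hr hclosed b
    have htT : t ∈ T := by
      intro s hts
      exact hmin s (hr.trans hbt hts)
    refine ⟨t, ⟨htT, hbt⟩, ?_⟩
    rintro t' ⟨ht'T, hbt'⟩
    have h1 : ¬ lexLt x t t' := ht'T t (hr.trans (hr.symm hbt') hbt)
    have h2 : ¬ lexLt x t' t := htT t' (hr.trans (hr.symm hbt) hbt')
    exact eq_of_not_lexLt hx h2 h1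
end

section
/- Let A be a compact metrizable topological space, Y a Hausdorff topological space, and f : A → Y a continuous surjection. Then there exists a Borel set T ⊆ A such that the restriction of f to T is a bijection from T onto Y, i.e., for every y ∈ Y there is exactly one t ∈ T with f(t) = y. -/
/-!
Embed `A` continuously and injectively into `ℕ → ℝ` and take `T` to be the set of points that are
lexicographically least in their fibre. Each fibre is compact, and a compact subset of `ℕ → ℝ` has
a lex-least element: minimise the first coordinate, then the second among the minimisers, and so
on, and intersect the resulting nested compact sets. The complement of `T` is the projection of
`{(x, x') | f x' = f x, x' <lex x}`, a countable union of sets `closed ∩ open` in the compact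
metrizable `A × A`; these are σ-compact, so the projection is σ-compact and hence Borel.
-/

open Set Function Topology

section LexMin

variable {α : Type*} [LinearOrder α]

def lexMinSeq (S : Set (ℕ → α)) : ℕ → Set (ℕ → α)
  | 0 => S
  | n + 1 => {s ∈ lexMinSeq S n | ∀ t ∈ lexMinSeq S n, s n ≤ t n}

lemma toLex_lt_toLex_iff_exists {s t : ℕ → α} :
    toLex s < toLex t ↔ ∃ i, (∀ j < i, s j = t j) ∧ s i < t i :=
  Iff.rfl

variable {S : Set (ℕ → α)}

lemma lexMinSeq_succ_subset (n : ℕ) : lexMinSeq S (n + 1) ⊆ lexMinSeq S n :=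
  fun _ hs => hs.1

lemma lexMinSeq_subset (n : ℕ) : lexMinSeq S n ⊆ S := by
  induction n with
  | zero => exact subset_rfl
  | succ n ih => exact (lexMinSeq_succ_subset n).trans ih

lemma eq_of_mem_lexMinSeq {n i : ℕ} {s t : ℕ → α} (hs : s ∈ lexMinSeq S n)
    (ht : t ∈ lexMinSeq S n) (hi : i < n) : s i = t i := by
  induction n with
  | zero => omega
  | succ n ih =>
    rcases Nat.lt_succ_iff_lt_or_eq.1 hi with hi | rfl
    · exact ih hs.1 ht.1 hi
    · exact le_antisymm (hs.2 t ht.1) (ht.2 s hs.1)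

lemma toLex_le_of_forall_mem_lexMinSeq {s t : ℕ → α} (hs : ∀ n, s ∈ lexMinSeq S n)
    (ht : t ∈ S) : toLex s ≤ toLex t := by
  by_contra! hts
  obtain ⟨i, hagree, hlt⟩ := toLex_lt_toLex_iff_exists.1 hts
  have ht_mem : ∀ n ≤ i, t ∈ lexMinSeq S n := by
    intro n hn
    induction n with
    | zero => exact ht
    | succ n ih =>
      refine ⟨ih (by omega), fun u hu => ?_⟩
      rw [hagree n (by omega)]
      exact (hs (n + 1)).2 u hu
  exact (hs (i + 1)).2 t (ht_mem i le_rfl) |>.not_gt hlt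

variable [TopologicalSpace α] [OrderClosedTopology α]

lemma isClosed_lexMinSeq (hS : IsClosed S) (n : ℕ) : IsClosed (lexMinSeq S n) := by
  induction n with
  | zero => exact hS
  | succ n ih =>
    have : lexMinSeq S (n + 1) = lexMinSeq S n ∩ ⋂ t ∈ lexMinSeq S n, {s | s n ≤ t n} := by
      ext s; simp [lexMinSeq]
    rw [this]
    exact ih.inter (isClosed_biInter fun t _ => isClosed_le (continuous_apply n) continuous_const)

lemma lexMinSeq_nonempty (hS : IsCompact S) (hne : S.Nonempty) (n : ℕ) :
    (lexMinSeq S n).Nonempty := by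
  induction n with
  | zero => exact hne
  | succ n ih =>
    have hcpt : IsCompact (lexMinSeq S n) :=
      hS.of_isClosed_subset (isClosed_lexMinSeq hS.isClosed n) (lexMinSeq_subset n)
    obtain ⟨s, hs, hmin⟩ := hcpt.exists_isMinOn ih (continuous_apply n).continuousOn
    exact ⟨s, hs, fun t ht => hmin ht⟩

theorem IsCompact.exists_forall_toLex_le_s12 (hS : IsCompact S) (hne : S.Nonempty) :
    ∃ s ∈ S, ∀ t ∈ S, toLex s ≤ toLex t := by
  obtain ⟨s, hs⟩ := IsCompact.nonempty_iInter_of_sequence_nonempty_isCompact_isClosed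
    (lexMinSeq S) lexMinSeq_succ_subset (lexMinSeq_nonempty hS hne) hS
    (isClosed_lexMinSeq hS.isClosed)
  rw [mem_iInter] at hs
  exact ⟨s, lexMinSeq_subset 0 (hs 0), fun t ht => toLex_le_of_forall_mem_lexMinSeq hs ht⟩

end LexMin

lemma IsSigmaCompact.measurableSet {X : Type*} [TopologicalSpace X] [T2Space X]
    [MeasurableSpace X] [OpensMeasurableSpace X] {s : Set X} (hs : IsSigmaCompact s) :
    MeasurableSet s := by
  obtain ⟨K, hK, rfl⟩ := hs
  exact MeasurableSet.iUnion fun n => (hK n).measurableSet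

lemma IsClosed.isSigmaCompact_inter_isOpen {X : Type*} [TopologicalSpace X]
    [TopologicalSpace.PseudoMetrizableSpace X] [SigmaCompactSpace X] {C U : Set X}
    (hC : IsClosed C) (hU : IsOpen U) : IsSigmaCompact (C ∩ U) := by
  let := TopologicalSpace.pseudoMetrizableSpacePseudoMetric X
  obtain ⟨F, hF, -, rfl, -⟩ := hU.exists_iUnion_isClosed
  rw [inter_iUnion]
  exact isSigmaCompact_iUnion _ fun n =>
    isSigmaCompact_univ.of_isClosed_subset (hC.inter (hF n)) (subset_univ _)

section Transversal

variable {A Y α : Type*} [TopologicalSpace A] [TopologicalSpace Y]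
  [LinearOrder α] [TopologicalSpace α] [OrderClosedTopology α] {f : A → Y} {e : A → ℕ → α}

def fiberwiseLexMin (f : A → Y) (e : A → ℕ → α) : Set A :=
  {x | ∀ x', f x' = f x → toLex (e x) ≤ toLex (e x')}

theorem existsUnique_mem_fiberwiseLexMin [CompactSpace A] [T1Space Y] (hf : Continuous f)
    (he : Continuous e) (he_inj : Injective e) {y : Y} (hy : y ∈ range f) :
    ∃! t, t ∈ fiberwiseLexMin f e ∧ f t = y := by
  obtain ⟨x₀, hx₀⟩ := hy
  have hfiber : IsCompact (e '' (f ⁻¹' {y})) :=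
    (isClosed_singleton.preimage hf).isCompact.image he
  obtain ⟨_, ⟨x, rfl, rfl⟩, hmin⟩ := hfiber.exists_forall_toLex_le_s12 ⟨e x₀, x₀, hx₀, rfl⟩
  have hx : x ∈ fiberwiseLexMin f e := fun x' hx' => hmin _ ⟨x', hx', rfl⟩
  refine ⟨x, ⟨hx, rfl⟩, fun t ⟨ht, htx⟩ => he_inj ?_⟩
  exact toLex.injective (le_antisymm (ht x htx.symm) (hx t htx))

theorem measurableSet_fiberwiseLexMin [CompactSpace A] [TopologicalSpace.MetrizableSpace A]
    [MeasurableSpace A] [BorelSpace A] [T2Space Y] (hf : Continuous f) (he : Continuous e) :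
    MeasurableSet (fiberwiseLexMin f e) := by
  let W : Set (A × A) := {p | f p.2 = f p.1 ∧ toLex (e p.2) < toLex (e p.1)}
  have hcompl : (fiberwiseLexMin f e)ᶜ = Prod.fst '' W := by
    ext x
    simp only [fiberwiseLexMin, W, mem_compl_iff, mem_ofPred_eq, not_forall, exists_prop,
      not_le, mem_image, Prod.exists, exists_and_right, exists_eq_right]
    exact Iff.rfl
  have hW : W = ⋃ n,
      {p | f p.2 = f p.1 ∧ ∀ j < n, e p.2 j = e p.1 j} ∩ {p | e p.2 n < e p.1 n} := by
    ext p
    simp only [W, toLex_lt_toLex_iff_exists, mem_iUnion, mem_inter_iff, mem_ofPred_eq, and_assoc,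
      exists_and_left]
  have hW_sigma : IsSigmaCompact W := by
    have hcoord (j : ℕ) (g : A × A → A) (hg : Continuous g) : Continuous fun p => e (g p) j :=
      (continuous_apply j).comp (he.comp hg)
    rw [hW]
    refine isSigmaCompact_iUnion _ fun n => IsClosed.isSigmaCompact_inter_isOpen ?_ ?_
    · simp only [ofPred_and, ofPred_forall]
      exact (isClosed_eq (hf.comp continuous_snd) (hf.comp continuous_fst)).inter
        (isClosed_iInter fun j => isClosed_iInter fun _ =>
          isClosed_eq (hcoord j _ continuous_snd) (hcoord j _ continuous_fst))
    · exact isOpen_lt (hcoord n _ continuous_snd) (hcoord n _ continuous_fst)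
  rw [← compl_compl (fiberwiseLexMin f e), hcompl]
  exact (hW_sigma.image continuous_fst).measurableSet.compl

end Transversal

/-- The Federer–Morse/Dixmier transversal lemma: a continuous surjection `f` from a
compact metrizable space `A` onto a Hausdorff space `Y` admits a Borel cross-section:
a Borel set `T ⊆ A` on which `f` restricts to a bijection onto `Y`. -/
theorem stmt_12 {A Y : Type*} [TopologicalSpace A] [CompactSpace A]
    [TopologicalSpace.MetrizableSpace A] [MeasurableSpace A] [BorelSpace A]
    [TopologicalSpace Y] [T2Space Y]
    (f : A → Y) (hf : Continuous f) (hsurj : Function.Surjective f) :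
    ∃ T : Set A, MeasurableSet T ∧ ∀ y : Y, ∃! t : A, t ∈ T ∧ f t = y := by
  obtain ⟨g, hg⟩ := TopologicalSpace.exists_embedding_l_infty A
  let e : A → ℕ → ℝ := fun x => g x
  have he : Continuous e := BoundedContinuousFunction.continuous_coe.comp hg.continuous
  have he_inj : Injective e := DFunLike.coe_injective.comp hg.injective
  exact ⟨fiberwiseLexMin f e, measurableSet_fiberwiseLexMin hf he,
    fun y => existsUnique_mem_fiberwiseLexMin hf he he_inj (hsurj y)⟩
end
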